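/- arXiv:1610.07550 — 2 statements merged into one kernel-verified Lean document; each statement's English description precedes it below -/
import Mathlib

section
/- The function U(t) = (2ν²/(μ_m − μ_a)) · e^{−μ_a t} · [ (μ_a − μ_m)/(μ_m(μ_a − 2μ_m)) − e^{−μ_m t}/μ_m − e^{(μ_a − 2μ_m)t}/(μ_a − 2μ_m) ] satisfies U'(t) = −μ_a U(t) + 2 ν M(t) e^{−μ_m t} with U(0) = 0, where M(t) = (ν/(μ_m − μ_a))(e^{−μ_a t} − e^{−μ_m t}), assuming μ_a ≠ μ_m, μ_m ≠ 0, and μ_a ≠ 2μ_m. -/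
open Real

/-! Writing `U(t) = C e^{-μ_a t} g(t)` with `C = 2ν²/(μ_m − μ_a)`, the product rule gives
`U' = −μ_a U + C e^{-μ_a t} g'(t)`, and `g'(t) = e^{-μ_m t} − e^{(μ_a − 2μ_m) t}`.
Since `e^{-μ_a t} e^{(μ_a − 2μ_m) t} = e^{-2μ_m t}`, the forcing term is
`C (e^{-μ_a t} − e^{-μ_m t}) e^{-μ_m t} = 2ν M(t) e^{-μ_m t}`. The constant in `g` is chosen
so that `g(0) = 0`. -/

theorem hasDerivAt_exp_const_mul (k t : ℝ) :
    HasDerivAt (fun t => exp (k * t)) (k * exp (k * t)) t :=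
  ((hasDerivAt_id t).const_mul k).exp.congr_deriv (by simp only [id, mul_one, mul_comm])

theorem HasDerivAt.const_mul_exp_neg_mul {g : ℝ → ℝ} {g' t : ℝ} (C a : ℝ)
    (hg : HasDerivAt g g' t) :
    HasDerivAt (fun t => C * Real.exp (-a * t) * g t)
      (-a * (C * Real.exp (-a * t) * g t) + C * Real.exp (-a * t) * g') t :=
  (((hasDerivAt_exp_const_mul (-a) t).const_mul C).mul hg).congr_deriv (by ring)

theorem hasDerivAt_const_sub_exp_div_sub_exp_div {m c : ℝ} (hm : m ≠ 0) (hc : c ≠ 0) (K t : ℝ) :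
    HasDerivAt (fun t => K - exp (-m * t) / m - exp (c * t) / c)
      (exp (-m * t) - exp (c * t)) t :=
  (((hasDerivAt_const t K).sub ((hasDerivAt_exp_const_mul (-m) t).div_const m)).sub
    ((hasDerivAt_exp_const_mul c t).div_const c)).congr_deriv (by field_simp; ring)

theorem exp_neg_mul_mul_sub_exp (a m t : ℝ) :
    exp (-a * t) * (exp (-m * t) - exp ((a - 2 * m) * t)) =
      (exp (-a * t) - exp (-m * t)) * exp (-m * t) := by
  simp only [mul_sub, sub_mul, ← exp_add]
  ring_nf

theorem stmt7_general (μa μm ν : ℝ) (h2 : μm ≠ 0) (h3 : μa ≠ 2 * μm)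
    (M U : ℝ → ℝ)
    (hM : M = fun t => (ν / (μm - μa)) * (Real.exp (-μa * t) - Real.exp (-μm * t)))
    (hU : U = fun t => (2 * ν ^ 2 / (μm - μa)) * Real.exp (-μa * t) *
      ((μa - μm) / (μm * (μa - 2 * μm)) - Real.exp (-μm * t) / μm
        - Real.exp ((μa - 2 * μm) * t) / (μa - 2 * μm))) :
    U 0 = 0 ∧ ∀ t : ℝ, HasDerivAt U (-μa * U t + 2 * ν * M t * Real.exp (-μm * t)) t := by
  have hc : μa - 2 * μm ≠ 0 := sub_ne_zero.mpr h3
  subst hM hU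
  refine ⟨?_, fun t => ?_⟩
  · have hg0 : (μa - μm) / (μm * (μa - 2 * μm)) - 1 / μm - 1 / (μa - 2 * μm) = 0 := by
      rw [div_sub_div _ _ (mul_ne_zero h2 hc) h2, div_sub_div _ _ (by positivity) hc,
        div_eq_zero_iff]
      exact Or.inl (by ring)
    simp only [mul_zero, exp_zero, one_div] at hg0 ⊢
    rw [hg0, mul_zero]
  · refine (HasDerivAt.const_mul_exp_neg_mul (2 * ν ^ 2 / (μm - μa)) μa
      (hasDerivAt_const_sub_exp_div_sub_exp_div h2 hc _ t)).congr_deriv ?_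
    beta_reduce
    linear_combination 2 * ν ^ 2 / (μm - μa) * exp_neg_mul_mul_sub_exp μa μm t

/-- the closed-form second factorial moment
`U(t) = (2ν²/(μ_m − μ_a)) e^{−μ_a t} [ (μ_a − μ_m)/(μ_m(μ_a − 2μ_m)) − e^{−μ_m t}/μ_m
  − e^{(μ_a − 2μ_m)t}/(μ_a − 2μ_m) ]`
satisfies `U' = −μ_a U + 2ν M(t) e^{−μ_m t}`, `U(0) = 0`, where
`M(t) = (ν/(μ_m − μ_a))(e^{−μ_a t} − e^{−μ_m t})`. -/
theorem stmt7 (μa μm ν : ℝ) (h1 : μa ≠ μm) (h2 : μm ≠ 0) (h3 : μa ≠ 2 * μm)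
    (M U : ℝ → ℝ)
    (hM : M = fun t => (ν / (μm - μa)) * (Real.exp (-μa * t) - Real.exp (-μm * t)))
    (hU : U = fun t => (2 * ν ^ 2 / (μm - μa)) * Real.exp (-μa * t) *
      ((μa - μm) / (μm * (μa - 2 * μm)) - Real.exp (-μm * t) / μm
        - Real.exp ((μa - 2 * μm) * t) / (μa - 2 * μm))) :
    U 0 = 0 ∧ ∀ t : ℝ, HasDerivAt U (-μa * U t + 2 * ν * M t * Real.exp (-μm * t)) t :=
  stmt7_general μa μm ν h2 h3 M U hM hU
end

section
/- The function U(t) = (ν_m ν_n/(μ_n − μ_a)) e^{−μ_a t}[ (μ_a−μ_n)/(μ_m(μ_a−μ_m−μ_n)) − e^{−μ_m t}/μ_m − e^{(μ_a−μ_m−μ_n)t}/(μ_a−μ_m−μ_n) ] + (ν_m ν_n/(μ_m − μ_a)) e^{−μ_a t}[ (μ_a−μ_m)/(μ_n(μ_a−μ_m−μ_n)) − e^{−μ_n t}/μ_n − e^{(μ_a−μ_m−μ_n)t}/(μ_a−μ_m−μ_n) ] satisfies U'(t) = −μ_a U(t) + ν_m M_n(t) e^{−μ_m t} + ν_n M_m(t)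 e^{−μ_n t} with U(0)=0, where M_j(t) = (ν_j/(μ_j − μ_a))(e^{−μ_a t} − e^{−μ_j t}) for j ∈ {m,n}, assuming μ_a ≠ μ_m, μ_a ≠ μ_n, μ_m ≠ 0, μ_n ≠ 0, and μ_a ≠ μ_m + μ_n. -/
open Real

/-! With `λ = μ_a − μ_m − μ_n`, each summand of `U` is `C e^{−μ_a t} g(t)` with
`g(t) = K − e^{−p t}/p − e^{λ t}/λ`, so the product rule gives
`U' = −μ_a U + Σ C e^{−μ_a t}(e^{−p t} − e^{λ t})`. Since `e^{−μ_a t} e^{λ t} = e^{−μ_m t} e^{−μ_n t}`,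
the remainders are exactly the source terms `ν_m M_n e^{−μ_m t}` and `ν_n M_m e^{−μ_n t}`;
the constants `K` are chosen so that `g(0) = 0`. -/

theorem hasDerivAt_exp_mul_div {c : ℝ} (hc : c ≠ 0) (t : ℝ) :
    HasDerivAt (fun t => exp (c * t) / c) (exp (c * t)) t :=
  ((((hasDerivAt_id t).const_mul c).exp).div_const c).congr_deriv (by simp only [id]; field_simp)

theorem hasDerivAt_mul_exp_mul_sub_exp_div_sub_exp_div {p q : ℝ} (hp : p ≠ 0) (hq : q ≠ 0)
    (C a K t : ℝ) :
    HasDerivAt (fun t => C * exp (-a * t) * (K - exp (-p * t) / p - exp (q * t) / q))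
      (-a * (C * exp (-a * t) * (K - exp (-p * t) / p - exp (q * t) / q))
        + C * exp (-a * t) * (exp (-p * t) - exp (q * t))) t := by
  have hdecay : HasDerivAt (fun t => exp (-a * t)) (-a * exp (-a * t)) t :=
    (((hasDerivAt_id t).const_mul (-a)).exp).congr_deriv (by simp [mul_comm])
  have hp' : HasDerivAt (fun t => exp (-p * t) / p) (-exp (-p * t)) t :=
    ((((hasDerivAt_id t).const_mul (-p)).exp).div_const p).congr_deriv
      (by simp only [id]; field_simp)
  exact ((hdecay.const_mul C).fun_mul (((hasDerivAt_const t K).fun_sub hp').fun_sub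
    (hasDerivAt_exp_mul_div hq t))).congr_deriv (by ring)

theorem exp_neg_mul_mul_exp_sub_sub_mul (a m n t : ℝ) :
    exp (-a * t) * exp ((a - m - n) * t) = exp (-m * t) * exp (-n * t) := by
  rw [← Real.exp_add, ← Real.exp_add]
  ring_nf

theorem stmt8_general (μa μm μn νm νn : ℝ)
    (h3 : μm ≠ 0) (h4 : μn ≠ 0) (h5 : μa ≠ μm + μn)
    (Mm Mn U : ℝ → ℝ)
    (hMm : Mm = fun t => (νm / (μm - μa)) * (Real.exp (-μa * t) - Real.exp (-μm * t)))
    (hMn : Mn = fun t => (νn / (μn - μa)) * (Real.exp (-μa * t) - Real.exp (-μn * t)))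
    (hU : U = fun t =>
      (νm * νn / (μn - μa)) * Real.exp (-μa * t) *
        ((μa - μn) / (μm * (μa - μm - μn)) - Real.exp (-μm * t) / μm
          - Real.exp ((μa - μm - μn) * t) / (μa - μm - μn))
      + (νm * νn / (μm - μa)) * Real.exp (-μa * t) *
        ((μa - μm) / (μn * (μa - μm - μn)) - Real.exp (-μn * t) / μn
          - Real.exp ((μa - μm - μn) * t) / (μa - μm - μn))) :
    U 0 = 0 ∧ ∀ t : ℝ,
      HasDerivAt U
        (-μa * U t + νm * Mn t * Real.exp (-μm * t) + νn * Mm t * Real.exp (-μn * t)) t := by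
  have hdiff : μa - μm - μn ≠ 0 := fun h => h5 (by linarith)
  subst hMm hMn hU
  refine ⟨?_, fun t => ?_⟩
  · simp only [mul_zero, exp_zero]
    field_simp
    ring
  · have hm := hasDerivAt_mul_exp_mul_sub_exp_div_sub_exp_div h3 hdiff
      (νm * νn / (μn - μa)) μa ((μa - μn) / (μm * (μa - μm - μn))) t
    have hn := hasDerivAt_mul_exp_mul_sub_exp_div_sub_exp_div h4 hdiff
      (νm * νn / (μm - μa)) μa ((μa - μm) / (μn * (μa - μm - μn))) t
    refine (hm.fun_add hn).congr_deriv ?_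
    linear_combination (-(νm * νn / (μn - μa) + νm * νn / (μm - μa))) *
      exp_neg_mul_mul_exp_sub_sub_mul μa μm μn t

/-- the closed-form mixed second moment `U_{mn|a}(t)` satisfies
`U' = −μ_a U + ν_m M_n(t) e^{−μ_m t} + ν_n M_m(t) e^{−μ_n t}` with `U(0) = 0`, where
`M_j(t) = (ν_j/(μ_j − μ_a))(e^{−μ_a t} − e^{−μ_j t})` for `j ∈ {m, n}`. -/
theorem stmt8 (μa μm μn νm νn : ℝ)
    (h1 : μa ≠ μm) (h2 : μa ≠ μn) (h3 : μm ≠ 0) (h4 : μn ≠ 0) (h5 : μa ≠ μm + μn)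
    (Mm Mn U : ℝ → ℝ)
    (hMm : Mm = fun t => (νm / (μm - μa)) * (Real.exp (-μa * t) - Real.exp (-μm * t)))
    (hMn : Mn = fun t => (νn / (μn - μa)) * (Real.exp (-μa * t) - Real.exp (-μn * t)))
    (hU : U = fun t =>
      (νm * νn / (μn - μa)) * Real.exp (-μa * t) *
        ((μa - μn) / (μm * (μa - μm - μn)) - Real.exp (-μm * t) / μm
          - Real.exp ((μa - μm - μn) * t) / (μa - μm - μn))
      + (νm * νn / (μm - μa)) * Real.exp (-μa * t) *
        ((μa - μm) / (μn * (μa - μm - μn)) - Real.exp (-μn * t) / μn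
          - Real.exp ((μa - μm - μn) * t) / (μa - μm - μn))) :
    U 0 = 0 ∧ ∀ t : ℝ,
      HasDerivAt U
        (-μa * U t + νm * Mn t * Real.exp (-μm * t) + νn * Mm t * Real.exp (-μn * t)) t :=
  stmt8_general μa μm μn νm νn h3 h4 h5 Mm Mn U hMm hMn hU
end
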